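/- arXiv:1202.0671 — 6 statements merged into one kernel-verified Lean document; each statement's English description precedes it below -/
import Mathlib

section
/- Let G be a graph, r a positive integer, C an r-identifying code in G, C' a nonempty subset of C, and c ∈ C'. Let I_1, ..., I_k be the distinct sets among {I_r(C';u) : u ∈ B_r(c)}, and let i_j be the number of vertices u ∈ B_r(c) with I_r(C';u) = I_j. Then s_r(C;c) ≤ Σ_{j=1}^{k} ( 1/|I_j| + (i_j - 1)/(|I_j| + 1) ). -/
open scoped Classical

noncomputable section

variable {V : Type*}

/-- The ball of radius `r` around `c` in a graph `G`. -/
def gBall [Fintype V] (G : SimpleGraph V) (r : ℕ) (c : V) : Finset V :=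
  Finset.univ.filter (fun u => G.dist c u ≤ r)

/-- The identifying set `I_r(C;u) = B_r(u) ∩ C`. -/
def gIset [Fintype V] (G : SimpleGraph V) (r : ℕ) (C : Finset V) (u : V) : Finset V :=
  (gBall G r u).filter (fun x => x ∈ C)

/-- The share `s_r(C;c)`. -/
def gShare [Fintype V] (G : SimpleGraph V) (r : ℕ) (C : Finset V) (c : V) : ℝ :=
  ∑ u ∈ gBall G r c, (1 : ℝ) / (gIset G r C u).card

/-!
Split the ball `B_r(c)` into the fibres of `u ↦ I_r(C';u)`. On the fibre of `I`, every
`I_r(C;u)` contains `I`, and since `C` is identifying at most one of them equals `I`; the others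
are strictly larger. So one vertex of the fibre contributes at most `1/|I|` to the share and
each of the remaining ones at most `1/(|I|+1)`. The set `I` is nonempty because it contains `c`.
-/

lemma Finset.sum_le_add_card_sub_one_mul {ι : Type*} {s : Finset ι} {f : ι → ℝ} {a b : ℝ}
    {i₀ : ι} (hi₀ : i₀ ∈ s) (ha : f i₀ ≤ a) (hb : ∀ i ∈ s, i ≠ i₀ → f i ≤ b) :
    ∑ i ∈ s, f i ≤ a + ((s.card : ℝ) - 1) * b := by
  rw [← Finset.add_sum_erase s f hi₀]
  have hrest : ∑ i ∈ s.erase i₀, f i ≤ (s.erase i₀).card • b :=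
    Finset.sum_le_card_nsmul _ _ _ fun i hi => hb i (Finset.mem_of_mem_erase hi)
      (Finset.ne_of_mem_erase hi)
  rw [Finset.card_erase_of_mem hi₀, nsmul_eq_mul,
    Nat.cast_sub (Finset.one_le_card.mpr ⟨i₀, hi₀⟩), Nat.cast_one] at hrest
  linarith

lemma Finset.exists_mem_forall_ne_imp_ne_of_injOn {α β : Type*} {s : Finset α} {g : α → β}
    (hs : s.Nonempty) (hg : Set.InjOn g s) (y : β) :
    ∃ i₀ ∈ s, ∀ i ∈ s, i ≠ i₀ → g i ≠ y := by
  by_cases h : ∃ i₀ ∈ s, g i₀ = y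
  · obtain ⟨i₀, hi₀, rfl⟩ := h
    exact ⟨i₀, hi₀, fun i hi hne heq => hne (hg hi hi₀ heq)⟩
  · push Not at h
    obtain ⟨i₀, hi₀⟩ := hs
    exact ⟨i₀, hi₀, fun i hi _ => h i hi⟩

lemma sum_one_div_card_le_of_subset_of_injOn {α β : Type*} {s : Finset α}
    {g : α → Finset β} {I : Finset β} (hs : s.Nonempty) (hg : Set.InjOn g s)
    (hI : I.Nonempty) (hsub : ∀ u ∈ s, I ⊆ g u) :
    ∑ u ∈ s, (1 : ℝ) / (g u).card ≤
      1 / (I.card : ℝ) + ((s.card : ℝ) - 1) / ((I.card : ℝ) + 1) := by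
  obtain ⟨u₀, hu₀, hne⟩ := Finset.exists_mem_forall_ne_imp_ne_of_injOn hs hg I
  rw [div_eq_mul_one_div ((s.card : ℝ) - 1)]
  refine Finset.sum_le_add_card_sub_one_mul hu₀ ?_ fun u hu hu₀ => ?_
  · exact one_div_le_one_div_of_le (by exact_mod_cast hI.card_pos)
      (by exact_mod_cast Finset.card_le_card (hsub u₀ hu₀))
  · have hlt : I.card < (g u).card :=
      Finset.card_lt_card (Finset.ssubset_iff_subset_ne.mpr ⟨hsub u hu, (hne u hu hu₀).symm⟩)
    exact one_div_le_one_div_of_le (by positivity) (by exact_mod_cast hlt)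

lemma gIset_mono [Fintype V] (G : SimpleGraph V) (r : ℕ) {C' C : Finset V} (h : C' ⊆ C)
    (u : V) : gIset G r C' u ⊆ gIset G r C u :=
  Finset.monotone_filter_right _ fun _ _ hx => h hx

lemma mem_gIset_of_mem_gBall [Fintype V] (G : SimpleGraph V) (r : ℕ) {C : Finset V} {c u : V}
    (hc : c ∈ C) (hu : u ∈ gBall G r c) : c ∈ gIset G r C u := by
  simp only [gIset, gBall, Finset.mem_filter, Finset.mem_univ, true_and] at hu ⊢
  exact ⟨by rwa [SimpleGraph.dist_comm], hc⟩

theorem share_estimation_general [Fintype V] (G : SimpleGraph V)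
    (r : ℕ) (C : Finset V)
    (hid : (∀ u : V, (gIset G r C u).Nonempty) ∧
      ∀ u v : V, gIset G r C u = gIset G r C v → u = v)
    (C' : Finset V) (hsub : C' ⊆ C) (c : V) (hc : c ∈ C') :
    gShare G r C c ≤
      ∑ I ∈ (gBall G r c).image (fun u => gIset G r C' u),
        (1 / (I.card : ℝ) +
          ((((gBall G r c).filter (fun u => gIset G r C' u = I)).card : ℝ) - 1) /
            ((I.card : ℝ) + 1)) := by
  rw [gShare, ← Finset.sum_fiberwise_of_maps_to (g := fun u => gIset G r C' u)
    fun u hu => Finset.mem_image_of_mem _ hu]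
  refine Finset.sum_le_sum fun I hI => ?_
  obtain ⟨u₀, hu₀, rfl⟩ := Finset.mem_image.mp hI
  refine sum_one_div_card_le_of_subset_of_injOn ⟨u₀, Finset.mem_filter.mpr ⟨hu₀, rfl⟩⟩
    (fun u _ v _ huv => hid.2 u v huv) ⟨c, mem_gIset_of_mem_gBall G r hc hu₀⟩ fun u hu => ?_
  rw [← (Finset.mem_filter.mp hu).2]
  exact gIset_mono G r hsub u

/-- Share-estimation lemma: for an `r`-identifying code `C`, a nonempty subset `C' ⊆ C`
and `c ∈ C'`, the share of `c` is bounded using the distinct `I`-sets with respect to `C'`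
of the vertices in `B_r(c)` and their multiplicities. -/
theorem share_estimation [Fintype V] (G : SimpleGraph V) (hG : G.Connected)
    (r : ℕ) (hr : 0 < r) (C : Finset V)
    (hid : (∀ u : V, (gIset G r C u).Nonempty) ∧
      ∀ u v : V, gIset G r C u = gIset G r C v → u = v)
    (C' : Finset V) (hsub : C' ⊆ C) (hne : C'.Nonempty) (c : V) (hc : c ∈ C') :
    gShare G r C c ≤
      ∑ I ∈ (gBall G r c).image (fun u => gIset G r C' u),
        (1 / (I.card : ℝ) +
          ((((gBall G r c).filter (fun u => gIset G r C' u = I)).card : ℝ) - 1) /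
            ((I.card : ℝ) + 1)) :=
  share_estimation_general G r C hid C' hsub c hc
end
end

section
/- Let C be a 2-identifying code in the square grid G_S and let c ∈ C be a codeword adjacent to another codeword of C. Then s_2(C;c) ≤ 35/6. -/
/-!
Each of the 13 vertices `u ∈ B₂(c)` has `c ∈ I₂(u)`, and the 8 of them that also lie in `B₂(c')`
have `{c, c'} ⊆ I₂(u)`. Hence `1/|I₂(u)|` is at most `1/3` on `B₂(c) ∩ B₂(c')` and at most `1/2`
on the other 5 vertices, which gives `8/3 + 5/2 = 31/6`, except on a vertex with `I₂(u) = {c}`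
(costing an extra `1/2`) or `I₂(u) = {c, c'}` (an extra `1/6`). Since the identifying sets are
distinct, each exception occurs at most once, and `31/6 + 1/2 + 1/6 = 35/6`.
-/

open scoped Classical

noncomputable section

/-- The ball of radius `r` (in graph distance = l1 distance) around `c` in the square grid. -/
def sqBall (r : ℕ) (c : ℤ × ℤ) : Finset (ℤ × ℤ) :=
  (Finset.Icc (c.1 - r, c.2 - r) (c.1 + r, c.2 + r)).filter
    (fun x => (x.1 - c.1).natAbs + (x.2 - c.2).natAbs ≤ r)

/-- The identifying set `I_r(C;u) = B_r(u) ∩ C`. -/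
def iset (r : ℕ) (C : Set (ℤ × ℤ)) (u : ℤ × ℤ) : Finset (ℤ × ℤ) :=
  (sqBall r u).filter (fun x => x ∈ C)

/-- `C` is an `r`-identifying code in the square grid. -/
def IsIdCode (r : ℕ) (C : Set (ℤ × ℤ)) : Prop :=
  (∀ u, (iset r C u).Nonempty) ∧ ∀ u v : ℤ × ℤ, iset r C u = iset r C v → u = v

/-- The share `s_r(C;c)`. -/
def share (r : ℕ) (C : Set (ℤ × ℤ)) (c : ℤ × ℤ) : ℚ :=
  ∑ u ∈ sqBall r c, (1 : ℚ) / (iset r C u).card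

open Finset

namespace Finset

variable {α K : Type*} [Field K] [LinearOrder K] [IsStrictOrderedRing K]

lemma one_div_card_le_of_mem [DecidableEq α] {s : Finset α} {a : α} (ha : a ∈ s) :
    1 / (#s : K) ≤ 1 / 2 + if s = {a} then 1 / 2 else 0 := by
  split_ifs with hs
  · rw [hs, card_singleton]; norm_num
  · have := card_lt_card (ssubset_iff_subset_ne.mpr ⟨singleton_subset_iff.mpr ha, Ne.symm hs⟩)
    rw [card_singleton] at this
    rw [add_zero]
    gcongr
    exact_mod_cast this

lemma one_div_card_le_of_pair_subset [DecidableEq α] {s : Finset α} {a b : α} (hab : a ≠ b)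
    (hs : {a, b} ⊆ s) :
    1 / (#s : K) ≤ 1 / 3 + if s = {a, b} then 1 / 6 else 0 := by
  split_ifs with heq
  · rw [heq, card_pair hab]; norm_num
  · have := card_lt_card (ssubset_iff_subset_ne.mpr ⟨hs, Ne.symm heq⟩)
    rw [card_pair hab] at this
    rw [add_zero]
    gcongr
    exact_mod_cast this

lemma sum_ite_apply_eq_le {β : Type*} [DecidableEq β] {f : α → β} (hf : Function.Injective f)
    (s : Finset α) (b : β) {x : K} (hx : 0 ≤ x) :
    ∑ u ∈ s, (if f u = b then x else 0) ≤ x := by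
  rw [← sum_filter, sum_const, nsmul_eq_mul]
  have : #(s.filter fun u => f u = b) ≤ 1 :=
    card_le_one.mpr fun u hu v hv => hf ((mem_filter.mp hu).2.trans (mem_filter.mp hv).2.symm)
  exact mul_le_of_le_one_left hx (by exact_mod_cast this)

end Finset

lemma mem_sqBall_iff {r : ℕ} {c x : ℤ × ℤ} :
    x ∈ sqBall r c ↔ (x.1 - c.1).natAbs + (x.2 - c.2).natAbs ≤ r := by
  simp only [sqBall, mem_filter, mem_Icc, Prod.le_def]
  omega

lemma mem_sqBall_comm {r : ℕ} {u v : ℤ × ℤ} : u ∈ sqBall r v ↔ v ∈ sqBall r u := by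
  simp only [mem_sqBall_iff]
  omega

lemma sqBall_add (r : ℕ) (c d : ℤ × ℤ) :
    sqBall r (c + d) = (sqBall r d).map (Equiv.addLeft c).toEmbedding := by
  ext x
  simp only [mem_map_equiv, mem_sqBall_iff, Equiv.addLeft_symm_apply, Prod.fst_add, Prod.snd_add,
    Prod.fst_neg, Prod.snd_neg]
  omega

lemma card_sqBall_two (c : ℤ × ℤ) : #(sqBall 2 c) = 13 := by
  rw [← add_zero c, sqBall_add, card_map]
  decide

lemma card_sqBall_two_inter_of_adjacent {c c' : ℤ × ℤ}
    (h : (c'.1 - c.1).natAbs + (c'.2 - c.2).natAbs = 1) :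
    #(sqBall 2 c ∩ sqBall 2 c') = 8 := by
  obtain ⟨d, rfl, hd⟩ : ∃ d : ℤ × ℤ, c' = c + d ∧
      (d = (1, 0) ∨ d = (-1, 0) ∨ d = (0, 1) ∨ d = (0, -1)) := by
    refine ⟨c' - c, by abel, ?_⟩
    simp only [Prod.ext_iff, Prod.fst_sub, Prod.snd_sub]
    omega
  rw [← add_zero c, add_assoc, zero_add, sqBall_add, sqBall_add, ← map_inter, card_map]
  rcases hd with rfl | rfl | rfl | rfl <;> decide

lemma sum_ite_mem_sqBall_two_of_adjacent {c c' : ℤ × ℤ}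
    (h : (c'.1 - c.1).natAbs + (c'.2 - c.2).natAbs = 1) :
    ∑ u ∈ sqBall 2 c, (if u ∈ sqBall 2 c' then (1 : ℚ) / 3 else 1 / 2) = 31 / 6 := by
  have hout : #((sqBall 2 c).filter fun u => u ∉ sqBall 2 c') = 5 := by
    have := card_filter_add_card_filter_not (s := sqBall 2 c) (fun u => u ∈ sqBall 2 c')
    rw [filter_mem_eq_inter, card_sqBall_two_inter_of_adjacent h, card_sqBall_two] at this
    omega
  rw [sum_ite, sum_const, sum_const, filter_mem_eq_inter,
    card_sqBall_two_inter_of_adjacent h, hout]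
  norm_num

lemma mem_iset_of_mem_sqBall {r : ℕ} {C : Set (ℤ × ℤ)} {x u : ℤ × ℤ} (hx : x ∈ C)
    (hu : u ∈ sqBall r x) : x ∈ iset r C u :=
  mem_filter.mpr ⟨mem_sqBall_comm.mp hu, hx⟩

lemma one_div_card_iset_le {r : ℕ} {C : Set (ℤ × ℤ)} {c c' u : ℤ × ℤ} (hc : c ∈ C)
    (hc' : c' ∈ C) (hne : c ≠ c') (hu : u ∈ sqBall r c) :
    1 / (#(iset r C u) : ℚ) ≤
      ((if u ∈ sqBall r c' then 1 / 3 else 1 / 2) + (if iset r C u = {c} then 1 / 2 else 0)) +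
        (if iset r C u = {c, c'} then 1 / 6 else 0) := by
  have hcu : c ∈ iset r C u := mem_iset_of_mem_sqBall hc hu
  have h₁ : (0 : ℚ) ≤ if iset r C u = {c} then 1 / 2 else 0 := by positivity
  have h₂ : (0 : ℚ) ≤ if iset r C u = {c, c'} then 1 / 6 else 0 := by positivity
  by_cases hu' : u ∈ sqBall r c'
  · have hpair : {c, c'} ⊆ iset r C u :=
      insert_subset hcu (singleton_subset_iff.mpr (mem_iset_of_mem_sqBall hc' hu'))
    have := one_div_card_le_of_pair_subset (K := ℚ) hne hpair
    rw [if_pos hu']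
    linarith
  · have := one_div_card_le_of_mem (K := ℚ) hcu
    rw [if_neg hu']
    linarith

lemma IsIdCode.injective {r : ℕ} {C : Set (ℤ × ℤ)} (hC : IsIdCode r C) :
    Function.Injective (iset r C) :=
  hC.2

/-- If a codeword `c` of a `2`-identifying code in the square grid is adjacent to
another codeword, then `s_2(C;c) ≤ 35/6`. -/
theorem share_le_of_adjacent_codeword (C : Set (ℤ × ℤ)) (hC : IsIdCode 2 C)
    (c : ℤ × ℤ) (hc : c ∈ C)
    (hadj : ∃ c' ∈ C, (c'.1 - c.1).natAbs + (c'.2 - c.2).natAbs = 1) :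
    share 2 C c ≤ 35 / 6 := by
  obtain ⟨c', hc', hcc'⟩ := hadj
  have hne : c ≠ c' := by
    rintro rfl
    simp at hcc'
  have total := sum_le_sum fun u (hu : u ∈ sqBall 2 c) => one_div_card_iset_le hc hc' hne hu
  rw [sum_add_distrib, sum_add_distrib, sum_ite_mem_sqBall_two_of_adjacent hcc'] at total
  have single : ∑ u ∈ sqBall 2 c, (if iset 2 C u = {c} then (1 : ℚ) / 2 else 0) ≤ 1 / 2 :=
    sum_ite_apply_eq_le hC.injective _ _ (by norm_num)
  have pair : ∑ u ∈ sqBall 2 c, (if iset 2 C u = {c, c'} then (1 : ℚ) / 6 else 0) ≤ 1 / 6 :=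
    sum_ite_apply_eq_le hC.injective _ _ (by norm_num)
  rw [share]
  linarith
end
end

section
/- Let C be a 2-identifying code in the square grid G_S and suppose c = (0,0) ∈ C has all four neighbors (-1,0), (1,0), (0,-1), (0,1) in C. Then s_2(C;c) ≤ 21/5. -/
open scoped Classical

noncomputable section

lemma mem_sqBall2 (c x : ℤ × ℤ) :
    x ∈ sqBall 2 c ↔ (x.1 - c.1).natAbs + (x.2 - c.2).natAbs ≤ 2 := by
  simp [sqBall, Finset.mem_filter, Finset.mem_Icc, Prod.le_def]
  omega

lemma mem_iset2 (C : Set (ℤ × ℤ)) (u x : ℤ × ℤ) :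
    x ∈ iset 2 C u ↔ (x.1 - u.1).natAbs + (x.2 - u.2).natAbs ≤ 2 ∧ x ∈ C := by
  simp [iset, Finset.mem_filter, mem_sqBall2]

lemma term_le (C : Set (ℤ × ℤ)) (u : ℤ × ℤ) (n : ℕ) (hn : 0 < n)
    (h : n ≤ (iset 2 C u).card) :
    (1 : ℚ) / (iset 2 C u).card ≤ 1 / n := by
  have h1 : (0:ℚ) < n := by exact_mod_cast hn
  have h2 : (n:ℚ) ≤ ((iset 2 C u).card : ℚ) := by exact_mod_cast h
  exact one_div_le_one_div_of_le h1 h2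

theorem share_le_of_four_neighbors (C : Set (ℤ × ℤ)) (hC : IsIdCode 2 C)
    (h0 : ((0 : ℤ), (0 : ℤ)) ∈ C)
    (h1 : ((-1 : ℤ), (0 : ℤ)) ∈ C) (h2 : ((1 : ℤ), (0 : ℤ)) ∈ C)
    (h3 : ((0 : ℤ), (-1 : ℤ)) ∈ C) (h4 : ((0 : ℤ), (1 : ℤ)) ∈ C) :
    share 2 C (0, 0) ≤ 21 / 5 := by
  -- subsets of the isets coming from the five known codewords
  have sub5 : ∀ u ∈ ({((0:ℤ),(0:ℤ)), (1,0), (-1,0), (0,1), (0,-1)} : Finset (ℤ×ℤ)),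
      ({((0:ℤ),(0:ℤ)), (1,0), (-1,0), (0,1), (0,-1)} : Finset (ℤ×ℤ)) ⊆ iset 2 C u := by
    intro u hu x hx
    fin_cases hu <;> fin_cases hx <;> exact (mem_iset2 C _ _).mpr ⟨by decide, by assumption⟩
  have card5 : ∀ u ∈ ({((0:ℤ),(0:ℤ)), (1,0), (-1,0), (0,1), (0,-1)} : Finset (ℤ×ℤ)),
      5 ≤ (iset 2 C u).card := by
    intro u hu
    have := Finset.card_le_card (sub5 u hu)
    have hl : ({((0:ℤ),(0:ℤ)), (1,0), (-1,0), (0,1), (0,-1)} : Finset (ℤ×ℤ)).card = 5 := by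
      decide
    omega
  -- diagonal points
  have cD1 : 3 ≤ (iset 2 C (1,1)).card := by
    have hsub : ({((0:ℤ),(0:ℤ)), (1,0), (0,1)} : Finset (ℤ×ℤ)) ⊆ iset 2 C (1,1) := by
      intro x hx; fin_cases hx <;> exact (mem_iset2 C _ _).mpr ⟨by decide, by assumption⟩
    have := Finset.card_le_card hsub
    have hl : ({((0:ℤ),(0:ℤ)), (1,0), (0,1)} : Finset (ℤ×ℤ)).card = 3 := by decide
    omega
  have cD2 : 3 ≤ (iset 2 C (1,-1)).card := by
    have hsub : ({((0:ℤ),(0:ℤ)), (1,0), (0,-1)} : Finset (ℤ×ℤ)) ⊆ iset 2 C (1,-1) := by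
      intro x hx; fin_cases hx <;> exact (mem_iset2 C _ _).mpr ⟨by decide, by assumption⟩
    have := Finset.card_le_card hsub
    have hl : ({((0:ℤ),(0:ℤ)), (1,0), (0,-1)} : Finset (ℤ×ℤ)).card = 3 := by decide
    omega
  have cD3 : 3 ≤ (iset 2 C (-1,1)).card := by
    have hsub : ({((0:ℤ),(0:ℤ)), (-1,0), (0,1)} : Finset (ℤ×ℤ)) ⊆ iset 2 C (-1,1) := by
      intro x hx; fin_cases hx <;> exact (mem_iset2 C _ _).mpr ⟨by decide, by assumption⟩
    have := Finset.card_le_card hsub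
    have hl : ({((0:ℤ),(0:ℤ)), (-1,0), (0,1)} : Finset (ℤ×ℤ)).card = 3 := by decide
    omega
  have cD4 : 3 ≤ (iset 2 C (-1,-1)).card := by
    have hsub : ({((0:ℤ),(0:ℤ)), (-1,0), (0,-1)} : Finset (ℤ×ℤ)) ⊆ iset 2 C (-1,-1) := by
      intro x hx; fin_cases hx <;> exact (mem_iset2 C _ _).mpr ⟨by decide, by assumption⟩
    have := Finset.card_le_card hsub
    have hl : ({((0:ℤ),(0:ℤ)), (-1,0), (0,-1)} : Finset (ℤ×ℤ)).card = 3 := by decide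
    omega
  -- axis points at distance 2
  have subA1 : ({((0:ℤ),(0:ℤ)), (1,0)} : Finset (ℤ×ℤ)) ⊆ iset 2 C (2,0) := by
    intro x hx; fin_cases hx <;> exact (mem_iset2 C _ _).mpr ⟨by decide, by assumption⟩
  have subA2 : ({((0:ℤ),(0:ℤ)), (-1,0)} : Finset (ℤ×ℤ)) ⊆ iset 2 C (-2,0) := by
    intro x hx; fin_cases hx <;> exact (mem_iset2 C _ _).mpr ⟨by decide, by assumption⟩
  have subA3 : ({((0:ℤ),(0:ℤ)), (0,1)} : Finset (ℤ×ℤ)) ⊆ iset 2 C (0,2) := by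
    intro x hx; fin_cases hx <;> exact (mem_iset2 C _ _).mpr ⟨by decide, by assumption⟩
  have subA4 : ({((0:ℤ),(0:ℤ)), (0,-1)} : Finset (ℤ×ℤ)) ⊆ iset 2 C (0,-2) := by
    intro x hx; fin_cases hx <;> exact (mem_iset2 C _ _).mpr ⟨by decide, by assumption⟩
  have cA1 : 2 ≤ (iset 2 C (2,0)).card := by
    have := Finset.card_le_card subA1
    have hl : ({((0:ℤ),(0:ℤ)), (1,0)} : Finset (ℤ×ℤ)).card = 2 := by decide
    omega
  have cA2 : 2 ≤ (iset 2 C (-2,0)).card := by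
    have := Finset.card_le_card subA2
    have hl : ({((0:ℤ),(0:ℤ)), (-1,0)} : Finset (ℤ×ℤ)).card = 2 := by decide
    omega
  have cA3 : 2 ≤ (iset 2 C (0,2)).card := by
    have := Finset.card_le_card subA3
    have hl : ({((0:ℤ),(0:ℤ)), (0,1)} : Finset (ℤ×ℤ)).card = 2 := by decide
    omega
  have cA4 : 2 ≤ (iset 2 C (0,-2)).card := by
    have := Finset.card_le_card subA4
    have hl : ({((0:ℤ),(0:ℤ)), (0,-1)} : Finset (ℤ×ℤ)).card = 2 := by decide
    omega
  -- term bounds from the above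
  have b1 := term_le C (0,0) 5 (by norm_num) (card5 _ (by decide))
  have b2 := term_le C (1,0) 5 (by norm_num) (card5 _ (by decide))
  have b3 := term_le C (-1,0) 5 (by norm_num) (card5 _ (by decide))
  have b4 := term_le C (0,1) 5 (by norm_num) (card5 _ (by decide))
  have b5 := term_le C (0,-1) 5 (by norm_num) (card5 _ (by decide))
  have d1 := term_le C (1,1) 3 (by norm_num) cD1
  have d2 := term_le C (1,-1) 3 (by norm_num) cD2
  have d3 := term_le C (-1,1) 3 (by norm_num) cD3
  have d4 := term_le C (-1,-1) 3 (by norm_num) cD4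
  have a1 := term_le C (2,0) 2 (by norm_num) cA1
  have a2 := term_le C (-2,0) 2 (by norm_num) cA2
  have a3 := term_le C (0,2) 2 (by norm_num) cA3
  have a4 := term_le C (0,-2) 2 (by norm_num) cA4
  -- expand the share as an explicit sum of 13 terms
  have expand : share 2 C (0,0) =
      (1:ℚ)/(iset 2 C (-2,0)).card + (1:ℚ)/(iset 2 C (-1,-1)).card
      + (1:ℚ)/(iset 2 C (-1,0)).card + (1:ℚ)/(iset 2 C (-1,1)).card
      + (1:ℚ)/(iset 2 C (0,-2)).card + (1:ℚ)/(iset 2 C (0,-1)).card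
      + (1:ℚ)/(iset 2 C (0,0)).card + (1:ℚ)/(iset 2 C (0,1)).card
      + (1:ℚ)/(iset 2 C (0,2)).card + (1:ℚ)/(iset 2 C (1,-1)).card
      + (1:ℚ)/(iset 2 C (1,0)).card + (1:ℚ)/(iset 2 C (1,1)).card
      + (1:ℚ)/(iset 2 C (2,0)).card := by
    unfold share
    rw [show sqBall 2 ((0:ℤ),(0:ℤ)) =
      ({(-2,0),(-1,-1),(-1,0),(-1,1),(0,-2),(0,-1),(0,0),(0,1),(0,2),(1,-1),(1,0),(1,1),(2,0)}
        : Finset (ℤ×ℤ)) from by decide]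
    rw [Finset.sum_insert (by decide), Finset.sum_insert (by decide),
      Finset.sum_insert (by decide), Finset.sum_insert (by decide),
      Finset.sum_insert (by decide), Finset.sum_insert (by decide),
      Finset.sum_insert (by decide), Finset.sum_insert (by decide),
      Finset.sum_insert (by decide), Finset.sum_insert (by decide),
      Finset.sum_insert (by decide), Finset.sum_insert (by decide),
      Finset.sum_singleton]
    ring
  rw [expand]
  -- case analysis: some axis point has at least 3 codewords in its ball
  by_cases hA1 : 3 ≤ (iset 2 C (2,0)).card
  · have := term_le C (2,0) 3 (by norm_num) hA1
    linarith
  by_cases hA2 : 3 ≤ (iset 2 C (-2,0)).card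
  · have := term_le C (-2,0) 3 (by norm_num) hA2
    linarith
  by_cases hA3 : 3 ≤ (iset 2 C (0,2)).card
  · have := term_le C (0,2) 3 (by norm_num) hA3
    linarith
  by_cases hA4 : 3 ≤ (iset 2 C (0,-2)).card
  · have := term_le C (0,-2) 3 (by norm_num) hA4
    linarith
  -- otherwise all four axis isets are exactly the minimal pairs; contradiction
  exfalso
  have eqA1 : iset 2 C (2,0) = ({((0:ℤ),(0:ℤ)), (1,0)} : Finset (ℤ×ℤ)) := by
    have hl : ({((0:ℤ),(0:ℤ)), (1,0)} : Finset (ℤ×ℤ)).card = 2 := by decide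
    exact (Finset.eq_of_subset_of_card_le subA1 (by omega)).symm
  have eqA2 : iset 2 C (-2,0) = ({((0:ℤ),(0:ℤ)), (-1,0)} : Finset (ℤ×ℤ)) := by
    have hl : ({((0:ℤ),(0:ℤ)), (-1,0)} : Finset (ℤ×ℤ)).card = 2 := by decide
    exact (Finset.eq_of_subset_of_card_le subA2 (by omega)).symm
  have eqA3 : iset 2 C (0,2) = ({((0:ℤ),(0:ℤ)), (0,1)} : Finset (ℤ×ℤ)) := by
    have hl : ({((0:ℤ),(0:ℤ)), (0,1)} : Finset (ℤ×ℤ)).card = 2 := by decide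
    exact (Finset.eq_of_subset_of_card_le subA3 (by omega)).symm
  have eqA4 : iset 2 C (0,-2) = ({((0:ℤ),(0:ℤ)), (0,-1)} : Finset (ℤ×ℤ)) := by
    have hl : ({((0:ℤ),(0:ℤ)), (0,-1)} : Finset (ℤ×ℤ)).card = 2 := by decide
    exact (Finset.eq_of_subset_of_card_le subA4 (by omega)).symm
  have mem_pair : ∀ (u p q : ℤ × ℤ), iset 2 C u = ({p, q} : Finset (ℤ×ℤ)) →
      ∀ x : ℤ × ℤ, x ∈ C → (x.1 - u.1).natAbs + (x.2 - u.2).natAbs ≤ 2 →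
      x = p ∨ x = q := by
    intro u p q hEq x hx hd
    have hmem : x ∈ iset 2 C u := (mem_iset2 C u x).mpr ⟨hd, hx⟩
    rw [hEq] at hmem
    simpa using hmem
  have key : iset 2 C (0,0) = iset 2 C (1,0) := by
    ext x
    obtain ⟨a, b⟩ := x
    rw [mem_iset2, mem_iset2]
    constructor
    · rintro ⟨hd, hx⟩
      refine ⟨?_, hx⟩
      by_contra hlt
      have hdisj : ((a - (-2)).natAbs + (b - 0).natAbs ≤ 2) ∨
          ((a - 0).natAbs + (b - 2).natAbs ≤ 2) ∨
          ((a - 0).natAbs + (b - (-2)).natAbs ≤ 2) := by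
        simp only at hd hlt
        omega
      rcases hdisj with h | h | h
      · rcases mem_pair (-2,0) (0,0) (-1,0) eqA2 (a,b) hx
          (by show (a - (-2)).natAbs + (b - 0).natAbs ≤ 2; exact h) with h' | h' <;>
          · rw [Prod.ext_iff] at h'
            simp only at h' hlt
            omega
      · rcases mem_pair (0,2) (0,0) (0,1) eqA3 (a,b) hx
          (by show (a - 0).natAbs + (b - 2).natAbs ≤ 2; exact h) with h' | h' <;>
          · rw [Prod.ext_iff] at h'
            simp only at h' hlt
            omega
      · rcases mem_pair (0,-2) (0,0) (0,-1) eqA4 (a,b) hx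
          (by show (a - 0).natAbs + (b - (-2)).natAbs ≤ 2; exact h) with h' | h' <;>
          · rw [Prod.ext_iff] at h'
            simp only at h' hlt
            omega
    · rintro ⟨hd, hx⟩
      refine ⟨?_, hx⟩
      by_contra hlt
      have hdisj : ((a - 2).natAbs + (b - 0).natAbs ≤ 2) ∨
          ((a - 0).natAbs + (b - 2).natAbs ≤ 2) ∨
          ((a - 0).natAbs + (b - (-2)).natAbs ≤ 2) := by
        simp only at hd hlt
        omega
      rcases hdisj with h | h | h
      · rcases mem_pair (2,0) (0,0) (1,0) eqA1 (a,b) hx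
          (by show (a - 2).natAbs + (b - 0).natAbs ≤ 2; exact h) with h' | h' <;>
          · rw [Prod.ext_iff] at h'
            simp only at h' hlt
            omega
      · rcases mem_pair (0,2) (0,0) (0,1) eqA3 (a,b) hx
          (by show (a - 0).natAbs + (b - 2).natAbs ≤ 2; exact h) with h' | h' <;>
          · rw [Prod.ext_iff] at h'
            simp only at h' hlt
            omega
      · rcases mem_pair (0,-2) (0,0) (0,-1) eqA4 (a,b) hx
          (by show (a - 0).natAbs + (b - (-2)).natAbs ≤ 2; exact h) with h' | h' <;>
          · rw [Prod.ext_iff] at h'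
            simp only at h' hlt
            omega
  have : ((0:ℤ),(0:ℤ)) = ((1:ℤ),(0:ℤ)) := hC.2 _ _ key
  exact absurd this (by decide)
end
end

section
/- Let C be a 2-identifying code in the square grid G_S and suppose c = (0,0) ∈ C with (-1,0), (0,-1), (0,1) ∈ C and (1,0) ∉ C. Then s_2(C;c) ≤ 293/60. -/
open scoped Classical

noncomputable section

/- ### Auxiliary machinery -/

/-- The four known codewords. -/
def K0 : Finset (ℤ × ℤ) := {(0, 0), (-1, 0), (0, -1), (0, 1)}

/-- The ball of radius 2 around the origin, as an explicit list. -/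
def U13 : Finset (ℤ × ℤ) := {(-2, 0), (-1, -1), (-1, 0), (-1, 1), (0, -2), (0, -1), (0, 0), (0, 1), (0, 2), (1, -1), (1, 0), (1, 1), (2, 0)}

/-- The symmetric difference of balls around (0,-2) and (1,-1), minus (1,0). -/
def L1 : Finset (ℤ × ℤ) := {(-2, -2), (-1, -3), (-1, -2), (0, -4), (0, -3), (1, 1), (2, -1), (2, 0), (3, -1)}

/-- The symmetric difference of balls around (0,0) and (1,0). -/
def L2 : Finset (ℤ × ℤ) := {(-2, 0), (-1, -1), (-1, 1), (0, -2), (0, 2), (1, -2), (1, 2), (2, -1), (2, 1), (3, 0)}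

/-- The symmetric difference of balls around (0,2) and (1,1), minus (1,0). -/
def L3 : Finset (ℤ × ℤ) := {(-2, 2), (-1, 2), (-1, 3), (0, 3), (0, 4), (1, -1), (2, 0), (2, 1), (3, 1)}

/-- Number of points of `F` within distance 2 of `u`. -/
def cnt (F : Finset (ℤ × ℤ)) (u : ℤ × ℤ) : ℕ :=
  (F.filter (fun p => (p.1 - u.1).natAbs + (p.2 - u.2).natAbs ≤ 2)).card

/-- The finite verification: for any choice of witnesses from the three symmetric
differences, the resulting counts give share at most 2051/420 ≤ 293/60. -/
theorem key : ∀ p1 ∈ L1, ∀ p2 ∈ L2, ∀ p3 ∈ L3,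
    (∀ u ∈ U13, 0 < cnt (insert p1 (insert p2 (insert p3 K0))) u ∧
       cnt (insert p1 (insert p2 (insert p3 K0))) u ≤ 7) ∧
    (∑ u ∈ U13, 420 / cnt (insert p1 (insert p2 (insert p3 K0))) u) ≤ 2051 := by decide

theorem mem_sqBall (x u : ℤ × ℤ) :
    x ∈ sqBall 2 u ↔ (x.1 - u.1).natAbs + (x.2 - u.2).natAbs ≤ 2 := by
  simp only [sqBall, Finset.mem_filter, Finset.mem_Icc, Prod.le_def]
  constructor
  · rintro ⟨-, h⟩; exact h
  · intro h
    refine ⟨⟨⟨?_, ?_⟩, ?_, ?_⟩, h⟩ <;> omega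

theorem share_le (C : Set (ℤ × ℤ)) (F : Finset (ℤ × ℤ)) (hF : ∀ p ∈ F, p ∈ C)
    (hpos : ∀ u ∈ U13, 0 < cnt F u ∧ cnt F u ≤ 7)
    (hsum : (∑ u ∈ U13, 420 / cnt F u) ≤ 2051) :
    share 2 C (0, 0) ≤ 293 / 60 := by
  have hU : sqBall 2 ((0 : ℤ), (0 : ℤ)) = U13 := by decide
  rw [share, hU]
  have step : ∀ u ∈ U13, (1 : ℚ) / (iset 2 C u).card ≤ ((420 / cnt F u : ℕ) : ℚ) / 420 := by
    intro u hu
    obtain ⟨h1, h7⟩ := hpos u hu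
    have hdvd : cnt F u ∣ 420 := by
      interval_cases h : cnt F u <;> norm_num
    have hle : cnt F u ≤ (iset 2 C u).card := by
      apply Finset.card_le_card
      intro x hx
      simp only [cnt, Finset.mem_filter] at hx
      simp only [iset, Finset.mem_filter]
      exact ⟨(mem_sqBall x u).2 hx.2, hF x hx.1⟩
    have hc0 : (0 : ℚ) < (cnt F u : ℚ) := by exact_mod_cast h1
    have e1 : ((420 / cnt F u : ℕ) : ℚ) / 420 = 1 / (cnt F u : ℚ) := by
      rw [div_eq_div_iff (by norm_num) (ne_of_gt hc0)]
      rw [one_mul]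
      exact_mod_cast Nat.div_mul_cancel hdvd
    rw [e1]
    apply one_div_le_one_div_of_le hc0
    exact_mod_cast hle
  calc ∑ u ∈ U13, (1 : ℚ) / (iset 2 C u).card
      ≤ ∑ u ∈ U13, ((420 / cnt F u : ℕ) : ℚ) / 420 := Finset.sum_le_sum step
    _ = ((∑ u ∈ U13, 420 / cnt F u : ℕ) : ℚ) / 420 := by
        rw [← Finset.sum_div, Nat.cast_sum]
    _ ≤ 2051 / 420 := by
        apply div_le_div_of_nonneg_right ?_ (by norm_num)
        · exact_mod_cast hsum
    _ = 293 / 60 := by norm_num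

theorem witness (C : Set (ℤ × ℤ)) (hC : IsIdCode 2 C) {u v : ℤ × ℤ} (huv : u ≠ v) :
    ∃ p, p ∈ C ∧ ((p ∈ sqBall 2 u ∧ p ∉ sqBall 2 v) ∨ (p ∉ sqBall 2 u ∧ p ∈ sqBall 2 v)) := by
  have hne : iset 2 C u ≠ iset 2 C v := fun h => huv (hC.2 u v h)
  have hne' : ¬ ∀ a, a ∈ iset 2 C u ↔ a ∈ iset 2 C v := fun h => hne (Finset.ext h)
  obtain ⟨p, hp⟩ := not_forall.1 hne'
  by_cases h1 : p ∈ iset 2 C u <;> by_cases h2 : p ∈ iset 2 C v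
  · exact absurd (iff_of_true h1 h2) hp
  · simp only [iset, Finset.mem_filter] at h1 h2
    exact ⟨p, h1.2, Or.inl ⟨h1.1, fun hm => h2 ⟨hm, h1.2⟩⟩⟩
  · simp only [iset, Finset.mem_filter] at h1 h2
    exact ⟨p, h2.2, Or.inr ⟨fun hm => h1 ⟨hm, h2.2⟩, h2.1⟩⟩
  · exact absurd (iff_of_false h1 h2) hp

theorem share_le_of_three_neighbors (C : Set (ℤ × ℤ)) (hC : IsIdCode 2 C)
    (h0 : ((0 : ℤ), (0 : ℤ)) ∈ C)
    (h1 : ((-1 : ℤ), (0 : ℤ)) ∈ C) (h2 : ((0 : ℤ), (-1 : ℤ)) ∈ C)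
    (h3 : ((0 : ℤ), (1 : ℤ)) ∈ C) (h4 : ((1 : ℤ), (0 : ℤ)) ∉ C) :
    share 2 C (0, 0) ≤ 293 / 60 := by
  obtain ⟨p1, hp1C, hp1⟩ := witness C hC (show ((0:ℤ), (-2:ℤ)) ≠ ((1:ℤ), (-1:ℤ)) by decide)
  obtain ⟨p2, hp2C, hp2⟩ := witness C hC (show ((0:ℤ), (0:ℤ)) ≠ ((1:ℤ), (0:ℤ)) by decide)
  obtain ⟨p3, hp3C, hp3⟩ := witness C hC (show ((0:ℤ), (2:ℤ)) ≠ ((1:ℤ), (1:ℤ)) by decide)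
  have hp1L : p1 ∈ L1 := by
    rcases hp1 with ⟨ha, hb⟩ | ⟨hb, ha⟩
    · rw [show sqBall 2 ((0:ℤ), (-2:ℤ)) = ({(-2, -2), (-1, -3), (-1, -2), (-1, -1), (0, -4), (0, -3), (0, -2), (0, -1), (0, 0), (1, -3), (1, -2), (1, -1), (2, -2)} : Finset (ℤ × ℤ)) from by decide] at ha
      simp only [Finset.mem_insert, Finset.mem_singleton] at ha
      obtain rfl|rfl|rfl|rfl|rfl|rfl|rfl|rfl|rfl|rfl|rfl|rfl|rfl := ha <;>
        first | decide | exact absurd (by decide) hb | exact absurd hp1C h4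
    · rw [show sqBall 2 ((1:ℤ), (-1:ℤ)) = ({(-1, -1), (0, -2), (0, -1), (0, 0), (1, -3), (1, -2), (1, -1), (1, 0), (1, 1), (2, -2), (2, -1), (2, 0), (3, -1)} : Finset (ℤ × ℤ)) from by decide] at ha
      simp only [Finset.mem_insert, Finset.mem_singleton] at ha
      obtain rfl|rfl|rfl|rfl|rfl|rfl|rfl|rfl|rfl|rfl|rfl|rfl|rfl := ha <;>
        first | decide | exact absurd (by decide) hb | exact absurd hp1C h4
  have hp2L : p2 ∈ L2 := by
    rcases hp2 with ⟨ha, hb⟩ | ⟨hb, ha⟩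
    · rw [show sqBall 2 ((0:ℤ), (0:ℤ)) = ({(-2, 0), (-1, -1), (-1, 0), (-1, 1), (0, -2), (0, -1), (0, 0), (0, 1), (0, 2), (1, -1), (1, 0), (1, 1), (2, 0)} : Finset (ℤ × ℤ)) from by decide] at ha
      simp only [Finset.mem_insert, Finset.mem_singleton] at ha
      obtain rfl|rfl|rfl|rfl|rfl|rfl|rfl|rfl|rfl|rfl|rfl|rfl|rfl := ha <;>
        first | decide | exact absurd (by decide) hb | exact absurd hp2C h4
    · rw [show sqBall 2 ((1:ℤ), (0:ℤ)) = ({(-1, 0), (0, -1), (0, 0), (0, 1), (1, -2), (1, -1), (1, 0), (1, 1), (1, 2), (2, -1), (2, 0), (2, 1), (3, 0)} : Finset (ℤ × ℤ)) from by decide] at ha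
      simp only [Finset.mem_insert, Finset.mem_singleton] at ha
      obtain rfl|rfl|rfl|rfl|rfl|rfl|rfl|rfl|rfl|rfl|rfl|rfl|rfl := ha <;>
        first | decide | exact absurd (by decide) hb | exact absurd hp2C h4
  have hp3L : p3 ∈ L3 := by
    rcases hp3 with ⟨ha, hb⟩ | ⟨hb, ha⟩
    · rw [show sqBall 2 ((0:ℤ), (2:ℤ)) = ({(-2, 2), (-1, 1), (-1, 2), (-1, 3), (0, 0), (0, 1), (0, 2), (0, 3), (0, 4), (1, 1), (1, 2), (1, 3), (2, 2)} : Finset (ℤ × ℤ)) from by decide] at ha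
      simp only [Finset.mem_insert, Finset.mem_singleton] at ha
      obtain rfl|rfl|rfl|rfl|rfl|rfl|rfl|rfl|rfl|rfl|rfl|rfl|rfl := ha <;>
        first | decide | exact absurd (by decide) hb | exact absurd hp3C h4
    · rw [show sqBall 2 ((1:ℤ), (1:ℤ)) = ({(-1, 1), (0, 0), (0, 1), (0, 2), (1, -1), (1, 0), (1, 1), (1, 2), (1, 3), (2, 0), (2, 1), (2, 2), (3, 1)} : Finset (ℤ × ℤ)) from by decide] at ha
      simp only [Finset.mem_insert, Finset.mem_singleton] at ha
      obtain rfl|rfl|rfl|rfl|rfl|rfl|rfl|rfl|rfl|rfl|rfl|rfl|rfl := ha <;>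
        first | decide | exact absurd (by decide) hb | exact absurd hp3C h4
  have hF : ∀ p ∈ insert p1 (insert p2 (insert p3 K0)), p ∈ C := by
    intro p hp
    simp only [K0, Finset.mem_insert, Finset.mem_singleton] at hp
    rcases hp with rfl|rfl|rfl|rfl|rfl|rfl|rfl <;> assumption
  obtain ⟨hpos, hsum⟩ := key p1 hp1L p2 hp2L p3 hp3L
  exact share_le C (insert p1 (insert p2 (insert p3 K0)) : Finset (ℤ × ℤ)) hF hpos hsum
end
end

section
/- Let C be a 2-identifying code in the square grid with c = (0,0) ∈ C, and suppose {(−1,0),(0,0),(0,2),(1,−2)} ⊆ C. Then s_2(C;c) ≤ 21/4. -/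
open scoped Classical

noncomputable section

lemma mem_iset {C : Set (ℤ×ℤ)} {w u : ℤ×ℤ} (hw : w ∈ C) (h : w ∈ sqBall 2 u) :
    w ∈ iset 2 C u := by
  simp [iset, Finset.mem_filter, h, hw]

lemma inv_card_le {m n : ℕ} (hm : 0 < m) (h : m ≤ n) : (1:ℚ)/n ≤ 1/m := by
  apply one_div_le_one_div_of_le
  · exact_mod_cast hm
  · exact_mod_cast h

lemma pair_bound {m a b : ℕ} (hm : 0 < m) (ha : m ≤ a) (hb : m ≤ b)
    (h : ¬(a = m ∧ b = m)) : (1:ℚ)/a + 1/b ≤ 1/m + 1/(m+1) := by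
  have hm1 : 0 < m + 1 := Nat.succ_pos m
  have key : ∀ x : ℕ, m + 1 ≤ x → (1:ℚ)/x ≤ 1/(m+1) := by
    intro x hx
    have := inv_card_le hm1 hx
    push_cast at this ⊢; linarith
  by_cases hA : a = m
  · have hb' : m + 1 ≤ b := by omega
    have h1 : (1:ℚ)/a ≤ 1/m := inv_card_le hm ha
    have h2 := key b hb'
    linarith
  · have ha' : m + 1 ≤ a := by omega
    have h1 := key a ha'
    have h2 : (1:ℚ)/b ≤ 1/m := inv_card_le hm hb
    linarith

lemma triple_bound {m a b c : ℕ} (hm : 0 < m) (ha : m ≤ a) (hb : m ≤ b) (hc : m ≤ c)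
    (hab : ¬(a = m ∧ b = m)) (hac : ¬(a = m ∧ c = m)) (hbc : ¬(b = m ∧ c = m)) :
    (1:ℚ)/a + 1/b + 1/c ≤ 1/m + 2/(m+1) := by
  have hm1 : 0 < m + 1 := Nat.succ_pos m
  have h2eq : (2:ℚ)/((m:ℚ)+1) = 1/((m:ℚ)+1) + 1/((m:ℚ)+1) := by ring
  have key : ∀ x : ℕ, m + 1 ≤ x → (1:ℚ)/x ≤ 1/(m+1) := by
    intro x hx
    have := inv_card_le hm1 hx
    push_cast at this ⊢; linarith
  by_cases hA : a = m
  · have hb' : m+1 ≤ b := by omega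
    have hc' : m+1 ≤ c := by omega
    have := inv_card_le hm ha
    have := key b hb'; have := key c hc'
    linarith
  · have ha' : m+1 ≤ a := by omega
    have h1 := key a ha'
    by_cases hB : b = m
    · have hc' : m+1 ≤ c := by omega
      have := inv_card_le hm hb
      have := key c hc'
      linarith
    · have hb' : m+1 ≤ b := by omega
      have := key b hb'
      have := inv_card_le hm hc
      linarith

lemma not_both {C : Set (ℤ×ℤ)} (hC : IsIdCode 2 C) {S : Finset (ℤ×ℤ)} {u v : ℤ×ℤ}
    (huv : u ≠ v) (hu : S ⊆ iset 2 C u) (hv : S ⊆ iset 2 C v) :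
    ¬((iset 2 C u).card = S.card ∧ (iset 2 C v).card = S.card) := by
  rintro ⟨e1, e2⟩
  have E1 : S = iset 2 C u := Finset.eq_of_subset_of_card_le hu (le_of_eq e1)
  have E2 : S = iset 2 C v := Finset.eq_of_subset_of_card_le hv (le_of_eq e2)
  exact huv (hC.2 u v (E1.symm.trans E2))

theorem share_le_21_4 (C : Set (ℤ × ℤ)) (hC : IsIdCode 2 C)
    (h0 : ((0 : ℤ), (0 : ℤ)) ∈ C) (h1 : ((-1 : ℤ), (0 : ℤ)) ∈ C)
    (h2 : ((0 : ℤ), (2 : ℤ)) ∈ C) (h3 : ((1 : ℤ), (-2 : ℤ)) ∈ C) :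
    share 2 C (0, 0) ≤ 21 / 4 := by
  have sub_p0_0 : ({((0 : ℤ), (0 : ℤ)), ((-1 : ℤ), (0 : ℤ)), ((0 : ℤ), (2 : ℤ))} : Finset (ℤ × ℤ)) ⊆ iset 2 C ((0 : ℤ), (0 : ℤ)) := by
    intro x hx
    simp only [Finset.mem_insert, Finset.mem_singleton] at hx
    rcases hx with rfl|rfl|rfl
    · exact mem_iset h0 (by decide)
    · exact mem_iset h1 (by decide)
    · exact mem_iset h2 (by decide)
  have lb_p0_0 : 3 ≤ (iset 2 C ((0 : ℤ), (0 : ℤ))).card := by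
    have h := Finset.card_le_card sub_p0_0
    rwa [show (({((0 : ℤ), (0 : ℤ)), ((-1 : ℤ), (0 : ℤ)), ((0 : ℤ), (2 : ℤ))} : Finset (ℤ × ℤ))).card = 3 from by decide] at h
  have sub_p0_1 : ({((0 : ℤ), (0 : ℤ)), ((-1 : ℤ), (0 : ℤ)), ((0 : ℤ), (2 : ℤ))} : Finset (ℤ × ℤ)) ⊆ iset 2 C ((0 : ℤ), (1 : ℤ)) := by
    intro x hx
    simp only [Finset.mem_insert, Finset.mem_singleton] at hx
    rcases hx with rfl|rfl|rfl
    · exact mem_iset h0 (by decide)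
    · exact mem_iset h1 (by decide)
    · exact mem_iset h2 (by decide)
  have lb_p0_1 : 3 ≤ (iset 2 C ((0 : ℤ), (1 : ℤ))).card := by
    have h := Finset.card_le_card sub_p0_1
    rwa [show (({((0 : ℤ), (0 : ℤ)), ((-1 : ℤ), (0 : ℤ)), ((0 : ℤ), (2 : ℤ))} : Finset (ℤ × ℤ))).card = 3 from by decide] at h
  have sub_pm1_1 : ({((0 : ℤ), (0 : ℤ)), ((-1 : ℤ), (0 : ℤ)), ((0 : ℤ), (2 : ℤ))} : Finset (ℤ × ℤ)) ⊆ iset 2 C ((-1 : ℤ), (1 : ℤ)) := by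
    intro x hx
    simp only [Finset.mem_insert, Finset.mem_singleton] at hx
    rcases hx with rfl|rfl|rfl
    · exact mem_iset h0 (by decide)
    · exact mem_iset h1 (by decide)
    · exact mem_iset h2 (by decide)
  have lb_pm1_1 : 3 ≤ (iset 2 C ((-1 : ℤ), (1 : ℤ))).card := by
    have h := Finset.card_le_card sub_pm1_1
    rwa [show (({((0 : ℤ), (0 : ℤ)), ((-1 : ℤ), (0 : ℤ)), ((0 : ℤ), (2 : ℤ))} : Finset (ℤ × ℤ))).card = 3 from by decide] at h
  have sub_p1_0 : ({((0 : ℤ), (0 : ℤ)), ((-1 : ℤ), (0 : ℤ)), ((1 : ℤ), (-2 : ℤ))} : Finset (ℤ × ℤ)) ⊆ iset 2 C ((1 : ℤ), (0 : ℤ)) := by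
    intro x hx
    simp only [Finset.mem_insert, Finset.mem_singleton] at hx
    rcases hx with rfl|rfl|rfl
    · exact mem_iset h0 (by decide)
    · exact mem_iset h1 (by decide)
    · exact mem_iset h3 (by decide)
  have lb_p1_0 : 3 ≤ (iset 2 C ((1 : ℤ), (0 : ℤ))).card := by
    have h := Finset.card_le_card sub_p1_0
    rwa [show (({((0 : ℤ), (0 : ℤ)), ((-1 : ℤ), (0 : ℤ)), ((1 : ℤ), (-2 : ℤ))} : Finset (ℤ × ℤ))).card = 3 from by decide] at h
  have sub_p0_m1 : ({((0 : ℤ), (0 : ℤ)), ((-1 : ℤ), (0 : ℤ)), ((1 : ℤ), (-2 : ℤ))} : Finset (ℤ × ℤ)) ⊆ iset 2 C ((0 : ℤ), (-1 : ℤ)) := by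
    intro x hx
    simp only [Finset.mem_insert, Finset.mem_singleton] at hx
    rcases hx with rfl|rfl|rfl
    · exact mem_iset h0 (by decide)
    · exact mem_iset h1 (by decide)
    · exact mem_iset h3 (by decide)
  have lb_p0_m1 : 3 ≤ (iset 2 C ((0 : ℤ), (-1 : ℤ))).card := by
    have h := Finset.card_le_card sub_p0_m1
    rwa [show (({((0 : ℤ), (0 : ℤ)), ((-1 : ℤ), (0 : ℤ)), ((1 : ℤ), (-2 : ℤ))} : Finset (ℤ × ℤ))).card = 3 from by decide] at h
  have sub_pm1_0 : ({((0 : ℤ), (0 : ℤ)), ((-1 : ℤ), (0 : ℤ))} : Finset (ℤ × ℤ)) ⊆ iset 2 C ((-1 : ℤ), (0 : ℤ)) := by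
    intro x hx
    simp only [Finset.mem_insert, Finset.mem_singleton] at hx
    rcases hx with rfl|rfl
    · exact mem_iset h0 (by decide)
    · exact mem_iset h1 (by decide)
  have lb_pm1_0 : 2 ≤ (iset 2 C ((-1 : ℤ), (0 : ℤ))).card := by
    have h := Finset.card_le_card sub_pm1_0
    rwa [show (({((0 : ℤ), (0 : ℤ)), ((-1 : ℤ), (0 : ℤ))} : Finset (ℤ × ℤ))).card = 2 from by decide] at h
  have sub_pm2_0 : ({((0 : ℤ), (0 : ℤ)), ((-1 : ℤ), (0 : ℤ))} : Finset (ℤ × ℤ)) ⊆ iset 2 C ((-2 : ℤ), (0 : ℤ)) := by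
    intro x hx
    simp only [Finset.mem_insert, Finset.mem_singleton] at hx
    rcases hx with rfl|rfl
    · exact mem_iset h0 (by decide)
    · exact mem_iset h1 (by decide)
  have lb_pm2_0 : 2 ≤ (iset 2 C ((-2 : ℤ), (0 : ℤ))).card := by
    have h := Finset.card_le_card sub_pm2_0
    rwa [show (({((0 : ℤ), (0 : ℤ)), ((-1 : ℤ), (0 : ℤ))} : Finset (ℤ × ℤ))).card = 2 from by decide] at h
  have sub_pm1_m1 : ({((0 : ℤ), (0 : ℤ)), ((-1 : ℤ), (0 : ℤ))} : Finset (ℤ × ℤ)) ⊆ iset 2 C ((-1 : ℤ), (-1 : ℤ)) := by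
    intro x hx
    simp only [Finset.mem_insert, Finset.mem_singleton] at hx
    rcases hx with rfl|rfl
    · exact mem_iset h0 (by decide)
    · exact mem_iset h1 (by decide)
  have lb_pm1_m1 : 2 ≤ (iset 2 C ((-1 : ℤ), (-1 : ℤ))).card := by
    have h := Finset.card_le_card sub_pm1_m1
    rwa [show (({((0 : ℤ), (0 : ℤ)), ((-1 : ℤ), (0 : ℤ))} : Finset (ℤ × ℤ))).card = 2 from by decide] at h
  have sub_p2_0 : ({((0 : ℤ), (0 : ℤ))} : Finset (ℤ × ℤ)) ⊆ iset 2 C ((2 : ℤ), (0 : ℤ)) := by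
    intro x hx
    simp only [Finset.mem_insert, Finset.mem_singleton] at hx
    rcases hx with rfl
    · exact mem_iset h0 (by decide)
  have lb_p2_0 : 1 ≤ (iset 2 C ((2 : ℤ), (0 : ℤ))).card := by
    have h := Finset.card_le_card sub_p2_0
    rwa [show (({((0 : ℤ), (0 : ℤ))} : Finset (ℤ × ℤ))).card = 1 from by decide] at h
  have sub_p0_2 : ({((0 : ℤ), (0 : ℤ)), ((0 : ℤ), (2 : ℤ))} : Finset (ℤ × ℤ)) ⊆ iset 2 C ((0 : ℤ), (2 : ℤ)) := by
    intro x hx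
    simp only [Finset.mem_insert, Finset.mem_singleton] at hx
    rcases hx with rfl|rfl
    · exact mem_iset h0 (by decide)
    · exact mem_iset h2 (by decide)
  have lb_p0_2 : 2 ≤ (iset 2 C ((0 : ℤ), (2 : ℤ))).card := by
    have h := Finset.card_le_card sub_p0_2
    rwa [show (({((0 : ℤ), (0 : ℤ)), ((0 : ℤ), (2 : ℤ))} : Finset (ℤ × ℤ))).card = 2 from by decide] at h
  have sub_p1_1 : ({((0 : ℤ), (0 : ℤ)), ((0 : ℤ), (2 : ℤ))} : Finset (ℤ × ℤ)) ⊆ iset 2 C ((1 : ℤ), (1 : ℤ)) := by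
    intro x hx
    simp only [Finset.mem_insert, Finset.mem_singleton] at hx
    rcases hx with rfl|rfl
    · exact mem_iset h0 (by decide)
    · exact mem_iset h2 (by decide)
  have lb_p1_1 : 2 ≤ (iset 2 C ((1 : ℤ), (1 : ℤ))).card := by
    have h := Finset.card_le_card sub_p1_1
    rwa [show (({((0 : ℤ), (0 : ℤ)), ((0 : ℤ), (2 : ℤ))} : Finset (ℤ × ℤ))).card = 2 from by decide] at h
  have sub_p0_m2 : ({((0 : ℤ), (0 : ℤ)), ((1 : ℤ), (-2 : ℤ))} : Finset (ℤ × ℤ)) ⊆ iset 2 C ((0 : ℤ), (-2 : ℤ)) := by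
    intro x hx
    simp only [Finset.mem_insert, Finset.mem_singleton] at hx
    rcases hx with rfl|rfl
    · exact mem_iset h0 (by decide)
    · exact mem_iset h3 (by decide)
  have lb_p0_m2 : 2 ≤ (iset 2 C ((0 : ℤ), (-2 : ℤ))).card := by
    have h := Finset.card_le_card sub_p0_m2
    rwa [show (({((0 : ℤ), (0 : ℤ)), ((1 : ℤ), (-2 : ℤ))} : Finset (ℤ × ℤ))).card = 2 from by decide] at h
  have sub_p1_m1 : ({((0 : ℤ), (0 : ℤ)), ((1 : ℤ), (-2 : ℤ))} : Finset (ℤ × ℤ)) ⊆ iset 2 C ((1 : ℤ), (-1 : ℤ)) := by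
    intro x hx
    simp only [Finset.mem_insert, Finset.mem_singleton] at hx
    rcases hx with rfl|rfl
    · exact mem_iset h0 (by decide)
    · exact mem_iset h3 (by decide)
  have lb_p1_m1 : 2 ≤ (iset 2 C ((1 : ℤ), (-1 : ℤ))).card := by
    have h := Finset.card_le_card sub_p1_m1
    rwa [show (({((0 : ℤ), (0 : ℤ)), ((1 : ℤ), (-2 : ℤ))} : Finset (ℤ × ℤ))).card = 2 from by decide] at h
  have nb_p0_0_p0_1 : ¬((iset 2 C ((0 : ℤ), (0 : ℤ))).card = 3 ∧ (iset 2 C ((0 : ℤ), (1 : ℤ))).card = 3) := by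
    have h := not_both hC (S := ({((0 : ℤ), (0 : ℤ)), ((-1 : ℤ), (0 : ℤ)), ((0 : ℤ), (2 : ℤ))} : Finset (ℤ × ℤ))) (u := ((0 : ℤ), (0 : ℤ))) (v := ((0 : ℤ), (1 : ℤ))) (by decide) sub_p0_0 sub_p0_1
    rwa [show (({((0 : ℤ), (0 : ℤ)), ((-1 : ℤ), (0 : ℤ)), ((0 : ℤ), (2 : ℤ))} : Finset (ℤ × ℤ))).card = 3 from by decide] at h
  have nb_p0_0_pm1_1 : ¬((iset 2 C ((0 : ℤ), (0 : ℤ))).card = 3 ∧ (iset 2 C ((-1 : ℤ), (1 : ℤ))).card = 3) := by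
    have h := not_both hC (S := ({((0 : ℤ), (0 : ℤ)), ((-1 : ℤ), (0 : ℤ)), ((0 : ℤ), (2 : ℤ))} : Finset (ℤ × ℤ))) (u := ((0 : ℤ), (0 : ℤ))) (v := ((-1 : ℤ), (1 : ℤ))) (by decide) sub_p0_0 sub_pm1_1
    rwa [show (({((0 : ℤ), (0 : ℤ)), ((-1 : ℤ), (0 : ℤ)), ((0 : ℤ), (2 : ℤ))} : Finset (ℤ × ℤ))).card = 3 from by decide] at h
  have nb_p0_1_pm1_1 : ¬((iset 2 C ((0 : ℤ), (1 : ℤ))).card = 3 ∧ (iset 2 C ((-1 : ℤ), (1 : ℤ))).card = 3) := by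
    have h := not_both hC (S := ({((0 : ℤ), (0 : ℤ)), ((-1 : ℤ), (0 : ℤ)), ((0 : ℤ), (2 : ℤ))} : Finset (ℤ × ℤ))) (u := ((0 : ℤ), (1 : ℤ))) (v := ((-1 : ℤ), (1 : ℤ))) (by decide) sub_p0_1 sub_pm1_1
    rwa [show (({((0 : ℤ), (0 : ℤ)), ((-1 : ℤ), (0 : ℤ)), ((0 : ℤ), (2 : ℤ))} : Finset (ℤ × ℤ))).card = 3 from by decide] at h
  have nb_p1_0_p0_m1 : ¬((iset 2 C ((1 : ℤ), (0 : ℤ))).card = 3 ∧ (iset 2 C ((0 : ℤ), (-1 : ℤ))).card = 3) := by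
    have h := not_both hC (S := ({((0 : ℤ), (0 : ℤ)), ((-1 : ℤ), (0 : ℤ)), ((1 : ℤ), (-2 : ℤ))} : Finset (ℤ × ℤ))) (u := ((1 : ℤ), (0 : ℤ))) (v := ((0 : ℤ), (-1 : ℤ))) (by decide) sub_p1_0 sub_p0_m1
    rwa [show (({((0 : ℤ), (0 : ℤ)), ((-1 : ℤ), (0 : ℤ)), ((1 : ℤ), (-2 : ℤ))} : Finset (ℤ × ℤ))).card = 3 from by decide] at h
  have nb_pm1_0_pm2_0 : ¬((iset 2 C ((-1 : ℤ), (0 : ℤ))).card = 2 ∧ (iset 2 C ((-2 : ℤ), (0 : ℤ))).card = 2) := by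
    have h := not_both hC (S := ({((0 : ℤ), (0 : ℤ)), ((-1 : ℤ), (0 : ℤ))} : Finset (ℤ × ℤ))) (u := ((-1 : ℤ), (0 : ℤ))) (v := ((-2 : ℤ), (0 : ℤ))) (by decide) sub_pm1_0 sub_pm2_0
    rwa [show (({((0 : ℤ), (0 : ℤ)), ((-1 : ℤ), (0 : ℤ))} : Finset (ℤ × ℤ))).card = 2 from by decide] at h
  have nb_pm1_0_pm1_m1 : ¬((iset 2 C ((-1 : ℤ), (0 : ℤ))).card = 2 ∧ (iset 2 C ((-1 : ℤ), (-1 : ℤ))).card = 2) := by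
    have h := not_both hC (S := ({((0 : ℤ), (0 : ℤ)), ((-1 : ℤ), (0 : ℤ))} : Finset (ℤ × ℤ))) (u := ((-1 : ℤ), (0 : ℤ))) (v := ((-1 : ℤ), (-1 : ℤ))) (by decide) sub_pm1_0 sub_pm1_m1
    rwa [show (({((0 : ℤ), (0 : ℤ)), ((-1 : ℤ), (0 : ℤ))} : Finset (ℤ × ℤ))).card = 2 from by decide] at h
  have nb_pm2_0_pm1_m1 : ¬((iset 2 C ((-2 : ℤ), (0 : ℤ))).card = 2 ∧ (iset 2 C ((-1 : ℤ), (-1 : ℤ))).card = 2) := by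
    have h := not_both hC (S := ({((0 : ℤ), (0 : ℤ)), ((-1 : ℤ), (0 : ℤ))} : Finset (ℤ × ℤ))) (u := ((-2 : ℤ), (0 : ℤ))) (v := ((-1 : ℤ), (-1 : ℤ))) (by decide) sub_pm2_0 sub_pm1_m1
    rwa [show (({((0 : ℤ), (0 : ℤ)), ((-1 : ℤ), (0 : ℤ))} : Finset (ℤ × ℤ))).card = 2 from by decide] at h
  have nb_p0_2_p1_1 : ¬((iset 2 C ((0 : ℤ), (2 : ℤ))).card = 2 ∧ (iset 2 C ((1 : ℤ), (1 : ℤ))).card = 2) := by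
    have h := not_both hC (S := ({((0 : ℤ), (0 : ℤ)), ((0 : ℤ), (2 : ℤ))} : Finset (ℤ × ℤ))) (u := ((0 : ℤ), (2 : ℤ))) (v := ((1 : ℤ), (1 : ℤ))) (by decide) sub_p0_2 sub_p1_1
    rwa [show (({((0 : ℤ), (0 : ℤ)), ((0 : ℤ), (2 : ℤ))} : Finset (ℤ × ℤ))).card = 2 from by decide] at h
  have nb_p0_m2_p1_m1 : ¬((iset 2 C ((0 : ℤ), (-2 : ℤ))).card = 2 ∧ (iset 2 C ((1 : ℤ), (-1 : ℤ))).card = 2) := by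
    have h := not_both hC (S := ({((0 : ℤ), (0 : ℤ)), ((1 : ℤ), (-2 : ℤ))} : Finset (ℤ × ℤ))) (u := ((0 : ℤ), (-2 : ℤ))) (v := ((1 : ℤ), (-1 : ℤ))) (by decide) sub_p0_m2 sub_p1_m1
    rwa [show (({((0 : ℤ), (0 : ℤ)), ((1 : ℤ), (-2 : ℤ))} : Finset (ℤ × ℤ))).card = 2 from by decide] at h
  have G1 := le_trans (triple_bound (by norm_num : 0 < 3) lb_p0_0 lb_p0_1 lb_pm1_1 nb_p0_0_p0_1 nb_p0_0_pm1_1 nb_p0_1_pm1_1) (by norm_num : _ ≤ (5/6 : ℚ))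
  have G2 := le_trans (pair_bound (by norm_num : 0 < 3) lb_p1_0 lb_p0_m1 nb_p1_0_p0_m1) (by norm_num : _ ≤ (7/12 : ℚ))
  have G3 := le_trans (triple_bound (by norm_num : 0 < 2) lb_pm1_0 lb_pm2_0 lb_pm1_m1 nb_pm1_0_pm2_0 nb_pm1_0_pm1_m1 nb_pm2_0_pm1_m1) (by norm_num : _ ≤ (7/6 : ℚ))
  have G4 := le_trans (inv_card_le (by norm_num : 0 < 1) lb_p2_0) (by norm_num : _ ≤ (1 : ℚ))
  have G5 := le_trans (pair_bound (by norm_num : 0 < 2) lb_p0_2 lb_p1_1 nb_p0_2_p1_1) (by norm_num : _ ≤ (5/6 : ℚ))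
  have G6 := le_trans (pair_bound (by norm_num : 0 < 2) lb_p0_m2 lb_p1_m1 nb_p0_m2_p1_m1) (by norm_num : _ ≤ (5/6 : ℚ))
  have hball : sqBall 2 ((0 : ℤ), (0 : ℤ)) = {((-2 : ℤ), (0 : ℤ)), ((-1 : ℤ), (-1 : ℤ)), ((-1 : ℤ), (0 : ℤ)), ((-1 : ℤ), (1 : ℤ)), ((0 : ℤ), (-2 : ℤ)), ((0 : ℤ), (-1 : ℤ)), ((0 : ℤ), (0 : ℤ)), ((0 : ℤ), (1 : ℤ)), ((0 : ℤ), (2 : ℤ)), ((1 : ℤ), (-1 : ℤ)), ((1 : ℤ), (0 : ℤ)), ((1 : ℤ), (1 : ℤ)), ((2 : ℤ), (0 : ℤ))} := by decide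
  rw [share, hball]
  rw [Finset.sum_insert (by decide)]
  rw [Finset.sum_insert (by decide)]
  rw [Finset.sum_insert (by decide)]
  rw [Finset.sum_insert (by decide)]
  rw [Finset.sum_insert (by decide)]
  rw [Finset.sum_insert (by decide)]
  rw [Finset.sum_insert (by decide)]
  rw [Finset.sum_insert (by decide)]
  rw [Finset.sum_insert (by decide)]
  rw [Finset.sum_insert (by decide)]
  rw [Finset.sum_insert (by decide)]
  rw [Finset.sum_insert (by decide)]
  rw [Finset.sum_singleton]
  linarith [G1, G2, G3, G4, G5, G6]
end
end

section
/- Let C be a 2-identifying code in the square grid and c = (0,0) ∈ C such that no vertex of B_1(c) \ {c} and no vertex at Euclidean distance √2 from c is in C, and exactly the two vertices (0,2), (2,0) of {(-2,0),(0,-2),(0,2),(2,0)} are in C, and at least one of (0,-3), (1,-2), (2,-1) is in C. Then s_2(C;c) ≤ 23/4. -/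
open scoped Classical

noncomputable section

lemma recip_le {k n : ℕ} (hk : 0 < k) (h : k ≤ n) : (1:ℚ)/(n:ℚ) ≤ 1/(k:ℚ) := by
  apply one_div_le_one_div_of_le
  · exact_mod_cast hk
  · exact_mod_cast h

lemma sum2 {x y A B : ℚ} (hx : x ≤ A) (hy : y ≤ A) (h : x ≤ B ∨ y ≤ B) :
    x + y ≤ A + B := by rcases h with h | h <;> linarith

lemma sum3 {x y z A B : ℚ} (hx : x ≤ A) (hy : y ≤ A) (hz : z ≤ A) (_hBA : B ≤ A)
    (hxy : x ≤ B ∨ y ≤ B) (hxz : x ≤ B ∨ z ≤ B) (hyz : y ≤ B ∨ z ≤ B) :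
    x + y + z ≤ A + 2*B := by
  rcases hxy with h | h
  · rcases hyz with h' | h' <;> linarith
  · rcases hxz with h' | h' <;> linarith

lemma sum4 {w x y z A B : ℚ} (hw : w ≤ A) (hx : x ≤ A) (hy : y ≤ A) (hz : z ≤ A) (_hBA : B ≤ A)
    (hwx : w ≤ B ∨ x ≤ B) (hwy : w ≤ B ∨ y ≤ B) (hwz : w ≤ B ∨ z ≤ B)
    (hxy : x ≤ B ∨ y ≤ B) (hxz : x ≤ B ∨ z ≤ B) (hyz : y ≤ B ∨ z ≤ B) :
    w + x + y + z ≤ A + 3*B := by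
  rcases hwx with h | h
  · rcases hxy with h1 | h1
    · rcases hyz with h2 | h2 <;> linarith
    · rcases hxz with h2 | h2 <;> linarith
  · rcases hwy with h1 | h1
    · rcases hyz with h2 | h2 <;> linarith
    · rcases hwz with h2 | h2 <;> linarith

theorem share_le_23_4 (C : Set (ℤ × ℤ)) (hC : IsIdCode 2 C)
    (h0 : ((0 : ℤ), (0 : ℤ)) ∈ C)
    (hn1 : ((-1 : ℤ), (0 : ℤ)) ∉ C) (hn2 : ((1 : ℤ), (0 : ℤ)) ∉ C)
    (hn3 : ((0 : ℤ), (-1 : ℤ)) ∉ C) (hn4 : ((0 : ℤ), (1 : ℤ)) ∉ C)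
    (hd1 : ((-1 : ℤ), (-1 : ℤ)) ∉ C) (hd2 : ((-1 : ℤ), (1 : ℤ)) ∉ C)
    (hd3 : ((1 : ℤ), (-1 : ℤ)) ∉ C) (hd4 : ((1 : ℤ), (1 : ℤ)) ∉ C)
    (hp1 : ((0 : ℤ), (2 : ℤ)) ∈ C) (hp2 : ((2 : ℤ), (0 : ℤ)) ∈ C)
    (hq1 : ((-2 : ℤ), (0 : ℤ)) ∉ C) (hq2 : ((0 : ℤ), (-2 : ℤ)) ∉ C)
    (hextra : ((0 : ℤ), (-3 : ℤ)) ∈ C ∨ ((1 : ℤ), (-2 : ℤ)) ∈ C ∨ ((2 : ℤ), (-1 : ℤ)) ∈ C) :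
    share 2 C (0, 0) ≤ 23 / 4 := by
  have mem_i : ∀ {u x : ℤ × ℤ}, x ∈ sqBall 2 u → x ∈ C → x ∈ iset 2 C u :=
    fun h1 h2 => Finset.mem_filter.2 ⟨h1, h2⟩
  -- the key distinctness consequence
  have key : ∀ (u v : ℤ × ℤ), u ≠ v → ∀ S : Finset (ℤ × ℤ),
      S ⊆ iset 2 C u → S ⊆ iset 2 C v →
      S.card + 1 ≤ (iset 2 C u).card ∨ S.card + 1 ≤ (iset 2 C v).card := by
    intro u v huv S hu hv
    by_contra h
    push_neg at h
    obtain ⟨h1, h2⟩ := h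
    have e1 : iset 2 C u = S := (Finset.eq_of_subset_of_card_le hu (by omega)).symm
    have e2 : iset 2 C v = S := (Finset.eq_of_subset_of_card_le hv (by omega)).symm
    exact huv (hC.2 u v (e1.trans e2.symm))
  -- expand the share
  have hb : sqBall 2 ((0:ℤ),(0:ℤ)) =
      ({(-2,0),(-1,-1),(-1,0),(-1,1),(0,-2),(0,-1),(0,0),(0,1),(0,2),(1,-1),(1,0),(1,1),(2,0)} :
        Finset (ℤ×ℤ)) := by decide
  rw [share, hb]
  rw [Finset.sum_insert (by decide), Finset.sum_insert (by decide),
      Finset.sum_insert (by decide), Finset.sum_insert (by decide),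
      Finset.sum_insert (by decide), Finset.sum_insert (by decide),
      Finset.sum_insert (by decide), Finset.sum_insert (by decide),
      Finset.sum_insert (by decide), Finset.sum_insert (by decide),
      Finset.sum_insert (by decide), Finset.sum_insert (by decide),
      Finset.sum_singleton]
  -- common subsets
  have s00 : ({(0,0),(0,2),(2,0)} : Finset (ℤ×ℤ)) ⊆ iset 2 C (0,0) := by
    simp only [Finset.insert_subset_iff, Finset.singleton_subset_iff]
    exact ⟨mem_i (by decide) h0, mem_i (by decide) hp1, mem_i (by decide) hp2⟩
  have s11 : ({(0,0),(0,2),(2,0)} : Finset (ℤ×ℤ)) ⊆ iset 2 C (1,1) := by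
    simp only [Finset.insert_subset_iff, Finset.singleton_subset_iff]
    exact ⟨mem_i (by decide) h0, mem_i (by decide) hp1, mem_i (by decide) hp2⟩
  have sR10 : ({(0,0),(2,0)} : Finset (ℤ×ℤ)) ⊆ iset 2 C (1,0) := by
    simp only [Finset.insert_subset_iff, Finset.singleton_subset_iff]
    exact ⟨mem_i (by decide) h0, mem_i (by decide) hp2⟩
  have sR1m1 : ({(0,0),(2,0)} : Finset (ℤ×ℤ)) ⊆ iset 2 C (1,-1) := by
    simp only [Finset.insert_subset_iff, Finset.singleton_subset_iff]
    exact ⟨mem_i (by decide) h0, mem_i (by decide) hp2⟩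
  have sR20 : ({(0,0),(2,0)} : Finset (ℤ×ℤ)) ⊆ iset 2 C (2,0) := by
    simp only [Finset.insert_subset_iff, Finset.singleton_subset_iff]
    exact ⟨mem_i (by decide) h0, mem_i (by decide) hp2⟩
  have sU01 : ({(0,0),(0,2)} : Finset (ℤ×ℤ)) ⊆ iset 2 C (0,1) := by
    simp only [Finset.insert_subset_iff, Finset.singleton_subset_iff]
    exact ⟨mem_i (by decide) h0, mem_i (by decide) hp1⟩
  have sUm11 : ({(0,0),(0,2)} : Finset (ℤ×ℤ)) ⊆ iset 2 C (-1,1) := by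
    simp only [Finset.insert_subset_iff, Finset.singleton_subset_iff]
    exact ⟨mem_i (by decide) h0, mem_i (by decide) hp1⟩
  have sU02 : ({(0,0),(0,2)} : Finset (ℤ×ℤ)) ⊆ iset 2 C (0,2) := by
    simp only [Finset.insert_subset_iff, Finset.singleton_subset_iff]
    exact ⟨mem_i (by decide) h0, mem_i (by decide) hp1⟩
  have t1 : ({(0,0)} : Finset (ℤ×ℤ)) ⊆ iset 2 C (-1,0) :=
    Finset.singleton_subset_iff.2 (mem_i (by decide) h0)
  have t2 : ({(0,0)} : Finset (ℤ×ℤ)) ⊆ iset 2 C (-1,-1) :=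
    Finset.singleton_subset_iff.2 (mem_i (by decide) h0)
  have t3 : ({(0,0)} : Finset (ℤ×ℤ)) ⊆ iset 2 C (-2,0) :=
    Finset.singleton_subset_iff.2 (mem_i (by decide) h0)
  have t4 : ({(0,0)} : Finset (ℤ×ℤ)) ⊆ iset 2 C (0,-2) :=
    Finset.singleton_subset_iff.2 (mem_i (by decide) h0)
  -- cardinality lower bounds as reciprocal upper bounds
  have rb : ∀ {u : ℤ × ℤ} {S : Finset (ℤ×ℤ)} (k : ℕ) (q : ℚ), (k:ℚ) = q → 0 < k →
      S ⊆ iset 2 C u → k ≤ S.card → (1:ℚ)/((iset 2 C u).card : ℚ) ≤ 1/q := by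
    intro u S k q hq hk hS hkS
    rw [← hq]
    exact recip_le hk (le_trans hkS (Finset.card_le_card hS))
  have rd : ∀ (u v : ℤ × ℤ), u ≠ v → ∀ S : Finset (ℤ × ℤ),
      S ⊆ iset 2 C u → S ⊆ iset 2 C v → ∀ (k : ℕ) (q : ℚ), S.card = k → ((k:ℚ)+1) = q →
      (1:ℚ)/((iset 2 C u).card : ℚ) ≤ 1/q ∨
      (1:ℚ)/((iset 2 C v).card : ℚ) ≤ 1/q := by
    intro u v huv S hu hv k q hk hq
    have hq' : ((k+1:ℕ):ℚ) = q := by push_cast; exact hq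
    rw [← hq']
    exact (key u v huv S hu hv).imp (fun h => recip_le (by omega) (by omega))
      (fun h => recip_le (by omega) (by omega))
  -- base reciprocal bounds
  have b00 := rb 3 3 (by norm_num) (by norm_num) s00 (by decide)
  have b11 := rb 3 3 (by norm_num) (by norm_num) s11 (by decide)
  have b10 := rb 2 2 (by norm_num) (by norm_num) sR10 (by decide)
  have b1m1 := rb 2 2 (by norm_num) (by norm_num) sR1m1 (by decide)
  have b20 := rb 2 2 (by norm_num) (by norm_num) sR20 (by decide)
  have b01 := rb 2 2 (by norm_num) (by norm_num) sU01 (by decide)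
  have bm11 := rb 2 2 (by norm_num) (by norm_num) sUm11 (by decide)
  have b02 := rb 2 2 (by norm_num) (by norm_num) sU02 (by decide)
  have c1 := rb 1 1 (by norm_num) (by norm_num) t1 (by decide)
  have c2 := rb 1 1 (by norm_num) (by norm_num) t2 (by decide)
  have c3 := rb 1 1 (by norm_num) (by norm_num) t3 (by decide)
  have c4 := rb 1 1 (by norm_num) (by norm_num) t4 (by decide)
  -- class disjunctions common to all cases
  have dA := rd (0,0) (1,1) (by decide) _ s00 s11 3 4 (by decide) (by norm_num)
  have dU1 := rd (0,1) (-1,1) (by decide) _ sU01 sUm11 2 3 (by decide) (by norm_num)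
  have dU2 := rd (0,1) (0,2) (by decide) _ sU01 sU02 2 3 (by decide) (by norm_num)
  have dU3 := rd (-1,1) (0,2) (by decide) _ sUm11 sU02 2 3 (by decide) (by norm_num)
  have e12 := rd (-1,0) (-1,-1) (by decide) _ t1 t2 1 2 (by decide) (by norm_num)
  have e13 := rd (-1,0) (-2,0) (by decide) _ t1 t3 1 2 (by decide) (by norm_num)
  have e14 := rd (-1,0) (0,-2) (by decide) _ t1 t4 1 2 (by decide) (by norm_num)
  have e23 := rd (-1,-1) (-2,0) (by decide) _ t2 t3 1 2 (by decide) (by norm_num)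
  have e24 := rd (-1,-1) (0,-2) (by decide) _ t2 t4 1 2 (by decide) (by norm_num)
  have e34 := rd (-2,0) (0,-2) (by decide) _ t3 t4 1 2 (by decide) (by norm_num)
  -- class sums
  have KA : (1:ℚ)/((iset 2 C (0,0)).card : ℚ) + (1:ℚ)/((iset 2 C (1,1)).card : ℚ)
      ≤ 1/3 + 1/4 := sum2 b00 b11 dA
  have KU : (1:ℚ)/((iset 2 C (0,1)).card : ℚ) + (1:ℚ)/((iset 2 C (-1,1)).card : ℚ)
      + (1:ℚ)/((iset 2 C (0,2)).card : ℚ) ≤ 1/2 + 2*(1/3) :=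
    sum3 b01 bm11 b02 (by norm_num) dU1 dU2 dU3
  rcases hextra with he | he | he
  · -- extra codeword (0,-3)
    have sD1 : ({(0,0),(0,-3)} : Finset (ℤ×ℤ)) ⊆ iset 2 C (0,-1) := by
      simp only [Finset.insert_subset_iff, Finset.singleton_subset_iff]
      exact ⟨mem_i (by decide) h0, mem_i (by decide) he⟩
    have sD2 : ({(0,0),(0,-3)} : Finset (ℤ×ℤ)) ⊆ iset 2 C (0,-2) := by
      simp only [Finset.insert_subset_iff, Finset.singleton_subset_iff]
      exact ⟨mem_i (by decide) h0, mem_i (by decide) he⟩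
    have f1 := rb 2 2 (by norm_num) (by norm_num) sD1 (by decide)
    have f2 := rb 2 2 (by norm_num) (by norm_num) sD2 (by decide)
    have dD := rd (0,-1) (0,-2) (by decide) _ sD1 sD2 2 3 (by decide) (by norm_num)
    have dR1 := rd (1,0) (1,-1) (by decide) _ sR10 sR1m1 2 3 (by decide) (by norm_num)
    have dR2 := rd (1,0) (2,0) (by decide) _ sR10 sR20 2 3 (by decide) (by norm_num)
    have dR3 := rd (1,-1) (2,0) (by decide) _ sR1m1 sR20 2 3 (by decide) (by norm_num)
    have KR : (1:ℚ)/((iset 2 C (1,0)).card : ℚ) + (1:ℚ)/((iset 2 C (1,-1)).card : ℚ)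
        + (1:ℚ)/((iset 2 C (2,0)).card : ℚ) ≤ 1/2 + 2*(1/3) :=
      sum3 b10 b1m1 b20 (by norm_num) dR1 dR2 dR3
    have KD : (1:ℚ)/((iset 2 C (0,-1)).card : ℚ) + (1:ℚ)/((iset 2 C (0,-2)).card : ℚ)
        ≤ 1/2 + 1/3 := sum2 f1 f2 dD
    have KS : (1:ℚ)/((iset 2 C (-1,0)).card : ℚ) + (1:ℚ)/((iset 2 C (-1,-1)).card : ℚ)
        + (1:ℚ)/((iset 2 C (-2,0)).card : ℚ) ≤ 1/1 + 2*(1/2) :=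
      sum3 c1 c2 c3 (by norm_num) e12 e13 e23
    linarith
  · -- extra codeword (1,-2)
    have sA1 : ({(0,0),(2,0),(1,-2)} : Finset (ℤ×ℤ)) ⊆ iset 2 C (1,0) := by
      simp only [Finset.insert_subset_iff, Finset.singleton_subset_iff]
      exact ⟨mem_i (by decide) h0, mem_i (by decide) hp2, mem_i (by decide) he⟩
    have sA2 : ({(0,0),(2,0),(1,-2)} : Finset (ℤ×ℤ)) ⊆ iset 2 C (1,-1) := by
      simp only [Finset.insert_subset_iff, Finset.singleton_subset_iff]
      exact ⟨mem_i (by decide) h0, mem_i (by decide) hp2, mem_i (by decide) he⟩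
    have sE1 : ({(0,0),(1,-2)} : Finset (ℤ×ℤ)) ⊆ iset 2 C (0,-1) := by
      simp only [Finset.insert_subset_iff, Finset.singleton_subset_iff]
      exact ⟨mem_i (by decide) h0, mem_i (by decide) he⟩
    have sE2 : ({(0,0),(1,-2)} : Finset (ℤ×ℤ)) ⊆ iset 2 C (0,-2) := by
      simp only [Finset.insert_subset_iff, Finset.singleton_subset_iff]
      exact ⟨mem_i (by decide) h0, mem_i (by decide) he⟩
    have g1 := rb 3 3 (by norm_num) (by norm_num) sA1 (by decide)
    have g2 := rb 3 3 (by norm_num) (by norm_num) sA2 (by decide)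
    have f1 := rb 2 2 (by norm_num) (by norm_num) sE1 (by decide)
    have f2 := rb 2 2 (by norm_num) (by norm_num) sE2 (by decide)
    have dB := rd (1,0) (1,-1) (by decide) _ sA1 sA2 3 4 (by decide) (by norm_num)
    have dE := rd (0,-1) (0,-2) (by decide) _ sE1 sE2 2 3 (by decide) (by norm_num)
    have KB : (1:ℚ)/((iset 2 C (1,0)).card : ℚ) + (1:ℚ)/((iset 2 C (1,-1)).card : ℚ)
        ≤ 1/3 + 1/4 := sum2 g1 g2 dB
    have KE : (1:ℚ)/((iset 2 C (0,-1)).card : ℚ) + (1:ℚ)/((iset 2 C (0,-2)).card : ℚ)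
        ≤ 1/2 + 1/3 := sum2 f1 f2 dE
    have KS : (1:ℚ)/((iset 2 C (-1,0)).card : ℚ) + (1:ℚ)/((iset 2 C (-1,-1)).card : ℚ)
        + (1:ℚ)/((iset 2 C (-2,0)).card : ℚ) ≤ 1/1 + 2*(1/2) :=
      sum3 c1 c2 c3 (by norm_num) e12 e13 e23
    linarith
  · -- extra codeword (2,-1)
    have sB1 : ({(0,0),(2,0),(2,-1)} : Finset (ℤ×ℤ)) ⊆ iset 2 C (1,0) := by
      simp only [Finset.insert_subset_iff, Finset.singleton_subset_iff]
      exact ⟨mem_i (by decide) h0, mem_i (by decide) hp2, mem_i (by decide) he⟩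
    have sB2 : ({(0,0),(2,0),(2,-1)} : Finset (ℤ×ℤ)) ⊆ iset 2 C (1,-1) := by
      simp only [Finset.insert_subset_iff, Finset.singleton_subset_iff]
      exact ⟨mem_i (by decide) h0, mem_i (by decide) hp2, mem_i (by decide) he⟩
    have sB3 : ({(0,0),(2,0),(2,-1)} : Finset (ℤ×ℤ)) ⊆ iset 2 C (2,0) := by
      simp only [Finset.insert_subset_iff, Finset.singleton_subset_iff]
      exact ⟨mem_i (by decide) h0, mem_i (by decide) hp2, mem_i (by decide) he⟩
    have sF : ({(0,0),(2,-1)} : Finset (ℤ×ℤ)) ⊆ iset 2 C (0,-1) := by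
      simp only [Finset.insert_subset_iff, Finset.singleton_subset_iff]
      exact ⟨mem_i (by decide) h0, mem_i (by decide) he⟩
    have g1 := rb 3 3 (by norm_num) (by norm_num) sB1 (by decide)
    have g2 := rb 3 3 (by norm_num) (by norm_num) sB2 (by decide)
    have g3 := rb 3 3 (by norm_num) (by norm_num) sB3 (by decide)
    have f1 := rb 2 2 (by norm_num) (by norm_num) sF (by decide)
    have dB1 := rd (1,0) (1,-1) (by decide) _ sB1 sB2 3 4 (by decide) (by norm_num)
    have dB2 := rd (1,0) (2,0) (by decide) _ sB1 sB3 3 4 (by decide) (by norm_num)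
    have dB3 := rd (1,-1) (2,0) (by decide) _ sB2 sB3 3 4 (by decide) (by norm_num)
    have KB : (1:ℚ)/((iset 2 C (1,0)).card : ℚ) + (1:ℚ)/((iset 2 C (1,-1)).card : ℚ)
        + (1:ℚ)/((iset 2 C (2,0)).card : ℚ) ≤ 1/3 + 2*(1/4) :=
      sum3 g1 g2 g3 (by norm_num) dB1 dB2 dB3
    have KS : (1:ℚ)/((iset 2 C (-1,0)).card : ℚ) + (1:ℚ)/((iset 2 C (-1,-1)).card : ℚ)
        + (1:ℚ)/((iset 2 C (-2,0)).card : ℚ) + (1:ℚ)/((iset 2 C (0,-2)).card : ℚ)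
        ≤ 1/1 + 3*(1/2) :=
      sum4 c1 c2 c3 c4 (by norm_num) e12 e13 e14 e23 e24 e34
    linarith
end
end
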